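/- arXiv:2406.07242 — 3 statements merged into one kernel-verified Lean document; each statement's English description precedes it below -/
import Mathlib

section
/- Let H be a Hilbert space, q ∈ H with q ≥ q₀·𝟙 pointwise for some q₀ > 0 (in H = L²(D,μ)), and let Θ := {θ ∈ Δ : ⟨q, θ⟩ = 1} where Δ is a convex cone contained in the nonnegative cone H₊. Suppose a Borel vector measure I on [0,∞) with values in H₊ admits two decompositions dI = θ⁽¹⟩ dν⁽¹⟩ = θ⁽²⟩ dν⁽²⟩ with θ⁽ⁱ⟩ taking values in Θ and ν⁽ⁱ⟩ nonnegative scalar measures. Then ν⁽¹⟩ = ν⁽²⟩ and θ⁽¹⟩ = θ⁽²⟩ up to ν-null sets. -/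
open scoped RealInnerProductSpace
open MeasureTheory

/-!
Pairing the decomposition with `q` and using `⟪q, θᵢ⟫ = 1` gives `⟪q, I [a, b]⟫ = νᵢ [a, b]`,
so `ν₁` and `ν₂` agree on closed intervals and are therefore equal. Then `θ₁ - θ₂` has zero
integral against `ν := ν₁ = ν₂` over every closed interval. Closed intervals form a π-system
generating the Borel σ-algebra, so on each `[-n, n]` the integral of `θ₁ - θ₂` vanishes over
every Borel set, and `θ₁ = θ₂` holds `ν`-a.e.
-/

namespace MeasureTheory

open Set

variable {E : Type*} [NormedAddCommGroup E] [NormedSpace ℝ E]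

theorem setIntegral_Icc_eq_setIntegral_Icc_max {ν : Measure ℝ} {c : ℝ} (hν : ν (Iio c) = 0)
    (f : ℝ → E) (a b : ℝ) : ∫ x in Icc a b, f x ∂ν = ∫ x in Icc (max a c) b, f x ∂ν := by
  refine setIntegral_congr_set ?_
  have hIcc : Icc (max a c) b = Icc a b ∩ Ici c := by
    ext; simp only [mem_Icc, mem_inter_iff, mem_Ici, max_le_iff]; tauto
  rw [hIcc]
  exact (inter_ae_eq_left_of_ae_eq_univ (ae_eq_univ.2 (by rwa [compl_Ici]))).symm

theorem setIntegral_Icc_eq_of_Iio_null {ν₁ ν₂ : Measure ℝ} {f₁ f₂ : ℝ → E} {c : ℝ}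
    (h₁ : ν₁ (Iio c) = 0) (h₂ : ν₂ (Iio c) = 0)
    (h : ∀ a b, c ≤ a → a ≤ b → ∫ x in Icc a b, f₁ x ∂ν₁ = ∫ x in Icc a b, f₂ x ∂ν₂)
    (a b : ℝ) : ∫ x in Icc a b, f₁ x ∂ν₁ = ∫ x in Icc a b, f₂ x ∂ν₂ := by
  rw [setIntegral_Icc_eq_setIntegral_Icc_max h₁, setIntegral_Icc_eq_setIntegral_Icc_max h₂]
  rcases le_or_gt (max a c) b with hab | hab
  · exact h _ _ (le_max_right a c) hab
  · simp [Icc_eq_empty_of_lt hab]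

variable [CompleteSpace E]

theorem ae_eq_zero_of_forall_setIntegral_Icc_eq_zero {α : Type*} [TopologicalSpace α]
    [MeasurableSpace α] [BorelSpace α] [SecondCountableTopology α] [LinearOrder α]
    [OrderTopology α] {μ : Measure α} {f : α → E} (hf : Integrable f μ)
    (huniv : ∫ x, f x ∂μ = 0) (hIcc : ∀ a b, a ≤ b → ∫ x in Icc a b, f x ∂μ = 0) :
    f =ᵐ[μ] 0 := by
  suffices ∀ s, MeasurableSet s → ∫ x in s, f x ∂μ = 0 from
    hf.ae_eq_zero_of_forall_setIntegral_eq_zero fun s hs _ => this s hs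
  intro s hs
  induction s, hs using MeasurableSpace.induction_on_inter
    (BorelSpace.measurable_eq.trans (borel_eq_generateFrom_Icc α)) (isPiSystem_Icc id id) with
  | empty => simp
  | basic _ hs =>
    obtain ⟨a, b, hab, rfl⟩ := hs
    exact hIcc a b hab
  | compl s hs ihs => simpa [ihs, huniv] using integral_add_compl hs hf
  | iUnion g g_disj g_meas hg => simp [integral_iUnion g_meas g_disj hf.integrableOn, hg]

theorem ae_eq_zero_of_forall_setIntegral_Icc_eq_zero_real {μ : Measure ℝ} {f : ℝ → E}
    (hf : ∀ a b, IntegrableOn f (Icc a b) μ) (hIcc : ∀ a b, ∫ x in Icc a b, f x ∂μ = 0) :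
    f =ᵐ[μ] 0 := by
  have hcover : (⋃ n : ℕ, Icc (-n : ℝ) n) = univ :=
    eq_univ_of_forall fun x => mem_iUnion.2 <| (exists_nat_ge |x|).imp fun _ hn => abs_le.1 hn
  rw [← μ.restrict_univ, ← hcover]
  refine (ae_restrict_iUnion_iff _ _).2 fun n =>
    ae_eq_zero_of_forall_setIntegral_Icc_eq_zero (hf _ _) (by simp [hIcc]) fun a b _ => ?_
  rw [Measure.restrict_restrict measurableSet_Icc, Icc_inter_Icc, hIcc]

theorem ae_eq_of_forall_setIntegral_Icc_eq_real {μ : Measure ℝ} {f g : ℝ → E}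
    (hf : ∀ a b, IntegrableOn f (Icc a b) μ) (hg : ∀ a b, IntegrableOn g (Icc a b) μ)
    (hfg : ∀ a b, ∫ x in Icc a b, f x ∂μ = ∫ x in Icc a b, g x ∂μ) : f =ᵐ[μ] g := by
  refine (ae_eq_zero_of_forall_setIntegral_Icc_eq_zero_real (fun a b => (hf a b).sub (hg a b))
    fun a b => ?_).mono fun x hx => sub_eq_zero.1 hx
  simp only [Pi.sub_apply]
  rw [integral_sub (hf a b) (hg a b), hfg, sub_self]

theorem inner_setIntegral_eq_measureReal {α H : Type*} [MeasurableSpace α]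
    [NormedAddCommGroup H] [InnerProductSpace ℝ H] [CompleteSpace H] {ν : Measure α}
    {θ : α → H} {s : Set α} (q : H) (hθ : IntegrableOn θ s ν) (hq : ∀ᵐ t ∂ν, ⟪q, θ t⟫ = 1) :
    ⟪q, ∫ t in s, θ t ∂ν⟫ = ν.real s := by
  rw [← integral_inner hθ q, integral_congr_ae (ae_restrict_of_ae hq), setIntegral_const,
    smul_eq_mul, mul_one]

end MeasureTheory

theorem stmt2_general {H : Type*} [NormedAddCommGroup H] [InnerProductSpace ℝ H] [CompleteSpace H]
    (q : H) (Δ : Set H)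
    (Θ : Set H) (hΘ : Θ = {θ ∈ Δ | ⟪q, θ⟫ = 1})
    (θ₁ θ₂ : ℝ → H)
    (hθ₁ : ∀ t : ℝ, 0 ≤ t → θ₁ t ∈ Θ) (hθ₂ : ∀ t : ℝ, 0 ≤ t → θ₂ t ∈ Θ)
    (ν₁ ν₂ : Measure ℝ) [IsLocallyFiniteMeasure ν₁] [IsLocallyFiniteMeasure ν₂]
    (hsupp₁ : ν₁ (Set.Iio 0) = 0) (hsupp₂ : ν₂ (Set.Iio 0) = 0)
    (hint₁ : ∀ a b : ℝ, IntegrableOn θ₁ (Set.Icc a b) ν₁)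
    (hint₂ : ∀ a b : ℝ, IntegrableOn θ₂ (Set.Icc a b) ν₂)
    (hdec : ∀ a b : ℝ, 0 ≤ a → a ≤ b →
      ∫ t in Set.Icc a b, θ₁ t ∂ν₁ = ∫ t in Set.Icc a b, θ₂ t ∂ν₂) :
    ν₁ = ν₂ ∧ θ₁ =ᵐ[ν₁] θ₂ := by
  have hq : ∀ {θ : ℝ → H} {ν : Measure ℝ}, (∀ t, 0 ≤ t → θ t ∈ Θ) →
      ν (Set.Iio 0) = 0 → ∀ᵐ t ∂ν, ⟪q, θ t⟫ = 1 := fun hθ hν => by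
    filter_upwards [measure_eq_zero_iff_ae_notMem.1 hν] with t ht
    exact (hΘ ▸ hθ t (not_lt.1 ht)).2
  have hdec' := setIntegral_Icc_eq_of_Iio_null hsupp₁ hsupp₂ hdec
  have hν : ν₁ = ν₂ := by
    refine Measure.ext_of_Icc _ _ fun a b _ =>
      (measureReal_eq_measureReal_iff measure_Icc_lt_top.ne measure_Icc_lt_top.ne).1 ?_
    rw [← inner_setIntegral_eq_measureReal q (hint₁ a b) (hq hθ₁ hsupp₁), hdec' a b,
      inner_setIntegral_eq_measureReal q (hint₂ a b) (hq hθ₂ hsupp₂)]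
  subst hν
  exact ⟨rfl, ae_eq_of_forall_setIntegral_Icc_eq_real hint₁ hint₂ hdec'⟩

/-- uniqueness of the decomposition `dI = θ dν` with `θ` valued in the set
`Θ = {θ ∈ Δ : ⟪q, θ⟫ = 1}`. -/
theorem stmt2 {H : Type*} [NormedAddCommGroup H] [InnerProductSpace ℝ H] [CompleteSpace H]
    (q : H) (Δ : Set H) (hΔ : Convex ℝ Δ)
    (hcone : ∀ c : ℝ, 0 ≤ c → ∀ θ ∈ Δ, c • θ ∈ Δ)
    (Θ : Set H) (hΘ : Θ = {θ ∈ Δ | ⟪q, θ⟫ = 1})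
    (θ₁ θ₂ : ℝ → H)
    (hθ₁ : ∀ t : ℝ, 0 ≤ t → θ₁ t ∈ Θ) (hθ₂ : ∀ t : ℝ, 0 ≤ t → θ₂ t ∈ Θ)
    (ν₁ ν₂ : Measure ℝ) [IsLocallyFiniteMeasure ν₁] [IsLocallyFiniteMeasure ν₂]
    (hsupp₁ : ν₁ (Set.Iio 0) = 0) (hsupp₂ : ν₂ (Set.Iio 0) = 0)
    (hint₁ : ∀ a b : ℝ, IntegrableOn θ₁ (Set.Icc a b) ν₁)
    (hint₂ : ∀ a b : ℝ, IntegrableOn θ₂ (Set.Icc a b) ν₂)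
    (hdec : ∀ a b : ℝ, 0 ≤ a → a ≤ b →
      ∫ t in Set.Icc a b, θ₁ t ∂ν₁ = ∫ t in Set.Icc a b, θ₂ t ∂ν₂) :
    ν₁ = ν₂ ∧ θ₁ =ᵐ[ν₁] θ₂ :=
  stmt2_general q Δ Θ hΘ θ₁ θ₂ hθ₁ hθ₂ ν₁ ν₂ hsupp₁ hsupp₂ hint₁ hint₂ hdec
end

section
/- Under Assumptions: A self-adjoint dissipative with ⟨Ax,x⟩ ≤ -δ|x|², G semiconcave with constant c₁ (linear modulus), and the mild solution map (x,I) ↦ X^{x,I} affine with X_t^{x,I} - X_t^{y,I} = e^{tA}(x-y). Then the value function V(x) = inf_I E[∫₀^∞ e^{-ρt}(G(X_t^{x,I})dt + ⟨q,dI_t⟩)] is semiconcave with constant c₁/(ρ + 2δ); i.e. λV(x)+(1-λ)V(y)-V(λx+(1-λ)y) ≤ (c₁/(2(ρ+2δ)))λ(1-λ)|x-y|² for all x,y ∈ H, λ ∈ [0,1]. -/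
/-!
Fix a control `I` and use it from `x`, `y` and `z = λx + (1-λ)y` alike. The state from `z` is the
`λ`-combination of the other two, which stay within `e^{-δt}‖x - y‖` of each other, so the
semiconcavity gap of `G` along the three trajectories is at most `(c₁/2) λ(1-λ) e^{-2δt} ‖x - y‖²`.
Discounting at rate `ρ` turns this into `c₁ / (2(ρ + 2δ)) · λ(1-λ) ‖x - y‖²`, and the control cost
cancels. Since `V x ≤ J x I` and `V y ≤ J y I` for every `I`, the bound passes to the infimum
of `J z I` over `I`.
-/

open MeasureTheory Set

/-- In an inner product space this says that `f - (c / 2) ‖·‖²` is concave. -/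
def SemiconcaveWith {E : Type*} [NormedAddCommGroup E] [Module ℝ E] (c : ℝ) (f : E → ℝ) :
    Prop :=
  ∀ x y : E, ∀ l ∈ Icc (0 : ℝ) 1,
    l * f x + (1 - l) * f y - f (l • x + (1 - l) • y) ≤ c / 2 * (l * (1 - l)) * ‖x - y‖ ^ 2

theorem SemiconcaveWith.gap_le {E : Type*} [NormedAddCommGroup E] [Module ℝ E] {c : ℝ}
    {f : E → ℝ} (hf : SemiconcaveWith c f) (hc : 0 ≤ c) {x y : E} {r : ℝ}
    (hxy : ‖x - y‖ ≤ r) {l : ℝ} (hl : l ∈ Icc (0 : ℝ) 1) :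
    l * f x + (1 - l) * f y - f (l • x + (1 - l) • y) ≤ c / 2 * (l * (1 - l)) * r ^ 2 :=
  (hf x y l hl).trans <| mul_le_mul_of_nonneg_left (pow_le_pow_left₀ (norm_nonneg _) hxy 2) <|
    mul_nonneg (by positivity) (mul_nonneg hl.1 (sub_nonneg.2 hl.2))

theorem integral_convex_gap_le {α : Type*} [MeasurableSpace α] {μ : Measure α}
    {f g h k : α → ℝ} (a b : ℝ) (hf : Integrable f μ) (hg : Integrable g μ)
    (hh : Integrable h μ) (hk : Integrable k μ)
    (hle : ∀ᵐ x ∂μ, a * f x + b * g x - h x ≤ k x) :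
    a * ∫ x, f x ∂μ + b * ∫ x, g x ∂μ - ∫ x, h x ∂μ ≤ ∫ x, k x ∂μ := by
  have hfg : Integrable (fun x => a * f x + b * g x) μ := (hf.const_mul a).add (hg.const_mul b)
  calc a * ∫ x, f x ∂μ + b * ∫ x, g x ∂μ - ∫ x, h x ∂μ
      = ∫ x, (a * f x + b * g x - h x) ∂μ := by
        rw [integral_sub hfg hh, integral_add (hf.const_mul a) (hg.const_mul b),
          integral_const_mul, integral_const_mul]
    _ ≤ ∫ x, k x ∂μ := integral_mono_ae (hfg.sub hh) hk hle

theorem csInf_image_convex_gap_le {ι : Type*} {S : Set ι} (hS : S.Nonempty) {f g h : ι → ℝ}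
    (hf : BddBelow (f '' S)) (hg : BddBelow (g '' S)) {a b K : ℝ} (ha : 0 ≤ a) (hb : 0 ≤ b)
    (hle : ∀ i ∈ S, a * f i + b * g i - h i ≤ K) :
    a * sInf (f '' S) + b * sInf (g '' S) - sInf (h '' S) ≤ K := by
  suffices a * sInf (f '' S) + b * sInf (g '' S) - K ≤ sInf (h '' S) by linarith
  refine le_csInf (hS.image h) ?_
  rintro _ ⟨i, hi, rfl⟩
  have hfi := mul_le_mul_of_nonneg_left (csInf_le hf (mem_image_of_mem f hi)) ha
  have hgi := mul_le_mul_of_nonneg_left (csInf_le hg (mem_image_of_mem g hi)) hb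
  linarith [hle i hi]

theorem discounted_gap_le {E : Type*} [NormedAddCommGroup E] [Module ℝ E] {G : E → ℝ}
    {c ρ δ r l : ℝ} (hG : SemiconcaveWith c G) (hc : 0 ≤ c) (hρδ : 0 < ρ + 2 * δ)
    (hl : l ∈ Icc (0 : ℝ) 1) {u v w : ℝ → E}
    (huv : ∀ t, 0 ≤ t → ‖u t - v t‖ ≤ Real.exp (-δ * t) * r)
    (hu : IntegrableOn (fun t => Real.exp (-ρ * t) * G (u t)) (Ioi 0))
    (hv : IntegrableOn (fun t => Real.exp (-ρ * t) * G (v t)) (Ioi 0))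
    (hw : IntegrableOn (fun t => Real.exp (-ρ * t) * G (w t)) (Ioi 0))
    (hw_eq : ∀ t, w t = l • u t + (1 - l) • v t) :
    l * (∫ t in Ioi 0, Real.exp (-ρ * t) * G (u t))
        + (1 - l) * (∫ t in Ioi 0, Real.exp (-ρ * t) * G (v t))
        - ∫ t in Ioi 0, Real.exp (-ρ * t) * G (w t)
      ≤ c / (2 * (ρ + 2 * δ)) * (l * (1 - l)) * r ^ 2 := by
  set C := c / 2 * (l * (1 - l)) * r ^ 2
  have hpointwise : ∀ t ∈ Ioi (0 : ℝ),
      l * (Real.exp (-ρ * t) * G (u t)) + (1 - l) * (Real.exp (-ρ * t) * G (v t))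
        - Real.exp (-ρ * t) * G (w t) ≤ C * Real.exp (-(ρ + 2 * δ) * t) := by
    intro t ht
    have hgap := hG.gap_le hc (huv t (le_of_lt ht)) hl
    rw [← hw_eq] at hgap
    calc l * (Real.exp (-ρ * t) * G (u t)) + (1 - l) * (Real.exp (-ρ * t) * G (v t))
          - Real.exp (-ρ * t) * G (w t)
        = Real.exp (-ρ * t) * (l * G (u t) + (1 - l) * G (v t) - G (w t)) := by ring
      _ ≤ Real.exp (-ρ * t) * (c / 2 * (l * (1 - l)) * (Real.exp (-δ * t) * r) ^ 2) :=
        mul_le_mul_of_nonneg_left hgap (Real.exp_pos _).le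
      _ = C * Real.exp (-(ρ + 2 * δ) * t) := by
        rw [show -(ρ + 2 * δ) * t = -ρ * t + -δ * t + -δ * t by ring, Real.exp_add,
          Real.exp_add]
        ring
  have hdecay : ∫ t in Ioi (0 : ℝ), C * Real.exp (-(ρ + 2 * δ) * t)
      = c / (2 * (ρ + 2 * δ)) * (l * (1 - l)) * r ^ 2 := by
    rw [integral_const_mul, integral_exp_mul_Ioi (by linarith) 0]
    simp only [C, mul_zero, Real.exp_zero]
    field_simp
  rw [← hdecay]
  exact integral_convex_gap_le l (1 - l) hu hv hw
    ((exp_neg_integrableOn_Ioi 0 hρδ).const_mul C)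
    ((ae_restrict_iff' measurableSet_Ioi).2 (ae_of_all _ hpointwise))

/-- semiconcavity of the value function with constant `c₁/(ρ + 2δ)`, inherited
from the semiconcavity of the running cost `G` via the contraction `‖X^x - X^y‖ ≤ e^{-δt}‖x-y‖`. -/
theorem stmt5 {H M Ω : Type*} [NormedAddCommGroup H] [InnerProductSpace ℝ H]
    [AddCommGroup M] [Module ℝ M] [MeasurableSpace Ω]
    (P : Measure Ω) [IsProbabilityMeasure P]
    (ρ δ c₁ : ℝ) (hρ : 0 < ρ) (hδ : 0 < δ) (hc₁ : 0 < c₁)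
    (G : H → ℝ)
    (hG : ∀ x y : H, ∀ l ∈ Set.Icc (0 : ℝ) 1,
      l * G x + (1 - l) * G y - G (l • x + (1 - l) • y) ≤
        c₁ / 2 * (l * (1 - l)) * ‖x - y‖ ^ 2)
    (X : H → M → ℝ → Ω → H)
    (haff : ∀ (x y : H) (I : M) (t : ℝ) (ω : Ω) (l : ℝ),
      X (l • x + (1 - l) • y) I t ω = l • X x I t ω + (1 - l) • X y I t ω)
    (hcontr : ∀ (x y : H) (I : M) (t : ℝ), 0 ≤ t → ∀ ω : Ω,
      ‖X x I t ω - X y I t ω‖ ≤ Real.exp (-δ * t) * ‖x - y‖)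
    (cost : M → ℝ)
    (J : H → M → ℝ)
    (hJ : ∀ x I, J x I =
      (∫ ω, (∫ t in Set.Ioi (0 : ℝ), Real.exp (-ρ * t) * G (X x I t ω)) ∂P) + cost I)
    (hint₁ : ∀ x I ω, IntegrableOn (fun t => Real.exp (-ρ * t) * G (X x I t ω)) (Set.Ioi 0))
    (hint₂ : ∀ x I, Integrable
      (fun ω => ∫ t in Set.Ioi (0 : ℝ), Real.exp (-ρ * t) * G (X x I t ω)) P)
    (S : Set M) (hSne : S.Nonempty)
    (hbdd : ∀ x, BddBelow ((fun I => J x I) '' S))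
    (V : H → ℝ) (hV : ∀ x, V x = sInf ((fun I => J x I) '' S)) :
    ∀ x y : H, ∀ l ∈ Set.Icc (0 : ℝ) 1,
      l * V x + (1 - l) * V y - V (l • x + (1 - l) • y) ≤
        c₁ / (2 * (ρ + 2 * δ)) * (l * (1 - l)) * ‖x - y‖ ^ 2 := by
  intro x y l hl
  rw [hV, hV, hV]
  refine csInf_image_convex_gap_le hSne (hbdd x) (hbdd y) hl.1 (sub_nonneg.2 hl.2) ?_
  intro I _
  have hpath := fun ω => discounted_gap_le hG hc₁.le (by linarith) hl
    (fun t ht => hcontr x y I t ht ω) (hint₁ x I ω) (hint₁ y I ω) (hint₁ _ I ω)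
    (fun t => haff x y I t ω l)
  have hexpect := integral_convex_gap_le l (1 - l) (hint₂ x I) (hint₂ y I) (hint₂ _ I)
    (integrable_const _) (ae_of_all P hpath)
  rw [integral_const, probReal_univ, one_smul] at hexpect
  rw [hJ, hJ, hJ]
  linarith
end

section
/- Let H be a Hilbert space, A : D(A) ⊆ H → H a self-adjoint densely defined operator with bounded inverse, and let |x|₋₁ := |A⁻¹x|. Let U : H → ℝ be convex and continuous with respect to |·|₋₁. Then every subgradient p ∈ ∂U(x) (w.r.t. the H inner product) belongs to D(A) = D(A*). -/
/-!
A subgradient `p` of `U` at `x` gives `⟪p, A h⟫ ≤ U (x + A h) - U x` for `h ∈ D(A)`. Since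
`|A h|₋₁ = ‖h‖`, continuity of `U` in `|·|₋₁` makes the right-hand side continuous in `h` for the
norm of `H`, so the linear functional `h ↦ ⟪p, A h⟫` is bounded above near `0`, hence continuous.
That is precisely `p ∈ D(A†)`, and `D(A†) ⊆ D(A)` is the hypothesis `hmax`.
-/

open scoped RealInnerProductSpace LinearPMap
open Topology

theorem LinearMap.continuous_of_le_sub_of_continuousAt {E : Type*} [SeminormedAddCommGroup E]
    [NormedSpace ℝ E] (f : E →ₗ[ℝ] ℝ) {g : E → ℝ} (hg : ContinuousAt g 0)
    (hfg : ∀ h, f h ≤ g h - g 0) : Continuous f := by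
  have hlt : ∀ᶠ h in 𝓝 (0 : E), g h < g 0 + 1 :=
    hg.eventually_lt continuousAt_const (lt_add_one _)
  have hlt_neg : ∀ᶠ h in 𝓝 (0 : E), g (-h) < g 0 + 1 :=
    (continuous_neg.tendsto' (0 : E) 0 neg_zero).eventually hlt
  refine f.toAddMonoidHom.continuous_of_isBounded_nhds_zero (hlt.and hlt_neg)
    ((Metric.isBounded_Icc (-1 : ℝ) 1).subset ?_)
  rintro _ ⟨h, ⟨h₁, h₂⟩, rfl⟩
  change f h ∈ Set.Icc (-1) 1
  have hneg := hfg (-h)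
  rw [f.map_neg] at hneg
  constructor <;> linarith [hfg h]

theorem continuousAt_comp_add_linearMap_of_norm_le {E H F : Type*} [SeminormedAddCommGroup E]
    [NormedSpace ℝ E] [AddCommGroup H] [Module ℝ H] [SeminormedAddCommGroup F]
    {B : H → F} {U : H → ℝ} {x : H}
    (hU : ∀ ε > 0, ∃ d > 0, ∀ y, ‖B (y - x)‖ < d → |U y - U x| < ε)
    (T : E →ₗ[ℝ] H) (hT : ∀ h, ‖B (T h)‖ ≤ ‖h‖) :
    ContinuousAt (fun h => U (x + T h)) 0 := by
  refine Metric.continuousAt_iff.mpr fun ε hε => ?_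
  obtain ⟨d, hd, hUd⟩ := hU ε hε
  refine ⟨d, hd, fun {h} hh => ?_⟩
  rw [dist_zero_right] at hh
  simpa [Real.dist_eq] using hUd (x + T h) (by simpa using (hT h).trans_lt hh)

theorem stmt14_general {H : Type*} [NormedAddCommGroup H] [InnerProductSpace ℝ H] [CompleteSpace H]
    (A : H →ₗ.[ℝ] H) (hdense : Dense (A.domain : Set H))
    (hmax : ∀ p : H, (∃ w : H, ∀ x : A.domain, ⟪p, A x⟫ = ⟪w, (x : H)⟫) → p ∈ A.domain)
    (B : H →L[ℝ] H)
    (hBA : ∀ x : A.domain, B (A x) = (x : H))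
    (U : H → ℝ)
    (hcont : ∀ x : H, ∀ ε : ℝ, 0 < ε → ∃ d : ℝ, 0 < d ∧
      ∀ y : H, ‖B (y - x)‖ < d → |U y - U x| < ε) :
    ∀ x p : H, (∀ y : H, ⟪p, y - x⟫ ≤ U y - U x) → p ∈ A.domain := by
  intro x p hsub
  have hp : p ∈ A†.domain := by
    rw [LinearPMap.mem_adjoint_domain_iff]
    refine LinearMap.continuous_of_le_sub_of_continuousAt _
      (continuousAt_comp_add_linearMap_of_norm_le (hcont x) A.toFun fun h => ?_) fun h => ?_
    · exact (congrArg norm (hBA h)).le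
    · simpa using hsub (x + A h)
  exact hmax p ⟨A† ⟨p, hp⟩, fun h => (LinearPMap.adjoint_isFormalAdjoint hdense ⟨p, hp⟩ h).symm⟩

/-- if `U` is convex and continuous with respect to `|x|₋₁ = ‖A⁻¹ x‖`, then
every subgradient of `U` belongs to `D(A)` (self-adjointness of `A` being encoded by
symmetry together with `D(A*) ⊆ D(A)`). -/
theorem stmt14 {H : Type*} [NormedAddCommGroup H] [InnerProductSpace ℝ H] [CompleteSpace H]
    (A : H →ₗ.[ℝ] H) (hdense : Dense (A.domain : Set H))
    (hsym : ∀ x y : A.domain, ⟪A x, (y : H)⟫ = ⟪(x : H), A y⟫)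
    (hmax : ∀ p : H, (∃ w : H, ∀ x : A.domain, ⟪p, A x⟫ = ⟪w, (x : H)⟫) → p ∈ A.domain)
    (B : H →L[ℝ] H)
    (hBA : ∀ x : A.domain, B (A x) = (x : H))
    (hAB : ∀ y : H, ∃ h : B y ∈ A.domain, A ⟨B y, h⟩ = y)
    (U : H → ℝ) (hconv : ConvexOn ℝ Set.univ U)
    (hcont : ∀ x : H, ∀ ε : ℝ, 0 < ε → ∃ d : ℝ, 0 < d ∧
      ∀ y : H, ‖B (y - x)‖ < d → |U y - U x| < ε) :
    ∀ x p : H, (∀ y : H, ⟪p, y - x⟫ ≤ U y - U x) → p ∈ A.domain :=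
  stmt14_general A hdense hmax B hBA U hcont
end
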